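/- arXiv:1212.0148 — 5 statements merged into one kernel-verified Lean document; each statement's English description precedes it below -/
import Mathlib

section
/- For every finite word w over {0,1,2}, the vector (x,y,z)^T = E_w (2,2,2)^T satisfies 14x - y - z > 0. -/
open Matrix BigOperators

/-- The matrix `E_0`. -/
noncomputable def E0 : Matrix (Fin 3) (Fin 3) ℝ :=
  !![47/75, -1/25, -1/25; 14/75, 3/25, -2/25; 14/75, -2/25, 3/25]

/-- The matrix `E_1`. -/
noncomputable def E1 : Matrix (Fin 3) (Fin 3) ℝ :=
  !![3/25, 14/75, -2/25; -1/25, 47/75, -1/25; -2/25, 14/75, 3/25]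

/-- The matrix `E_2`. -/
noncomputable def E2 : Matrix (Fin 3) (Fin 3) ℝ :=
  !![3/25, -2/25, 14/75; -2/25, 3/25, 14/75; -1/25, -1/25, 47/75]

/-- `Emat i` is the matrix `E_i`. -/
noncomputable def Emat : Fin 3 → Matrix (Fin 3) (Fin 3) ℝ := ![E0, E1, E2]

/-- For a word `w = [w₁, ..., wₘ]`, `Eword w = E_{wₘ} * ⋯ * E_{w₁}`
(the empty word giving the identity matrix). -/
noncomputable def Eword (w : List (Fin 3)) : Matrix (Fin 3) (Fin 3) ℝ :=
  ((w.map Emat).reverse).prod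

/-!
In the coordinates `u = 15 v - (v₀ + v₁ + v₂) (1, 1, 1)`, in which `u₀ = 14 x - y - z`, the map
`E_i` multiplies the Lorentzian form `Q u = 2 (u₀ u₁ + u₁ u₂ + u₂ u₀) - (u₀² + u₁² + u₂²)` by `1/25`
and the coordinate `u_i` by `3/5`. Since `Q u = 4 u₁ u₂ - (u₀ - u₁ - u₂)²` (and symmetrically),
`Q u > 0` forces all coordinates of `u` to have the same sign, so the forward cone
`{Q > 0, u > 0}` is invariant under every `E_i`. It contains the image `(24, 24, 24)` of `(2, 2, 2)`.
-/

noncomputable def energyCoords (v : Fin 3 → ℝ) : Fin 3 → ℝ :=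
  fun i => 15 * v i - ∑ j, v j

def lorentzForm (u : Fin 3 → ℝ) : ℝ :=
  2 * (u 0 * u 1 + u 1 * u 2 + u 2 * u 0) - (u 0 ^ 2 + u 1 ^ 2 + u 2 ^ 2)

def forwardCone : Set (Fin 3 → ℝ) :=
  {u | 0 < lorentzForm u ∧ ∀ i, 0 < u i}

lemma pos_of_lorentzForm_pos {u : Fin 3 → ℝ} (hQ : 0 < lorentzForm u) {i : Fin 3}
    (hi : 0 < u i) (j : Fin 3) : 0 < u j := by
  unfold lorentzForm at hQ
  have h01 : 0 < u 0 * u 1 := by nlinarith [sq_nonneg (u 2 - u 0 - u 1)]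
  have h12 : 0 < u 1 * u 2 := by nlinarith [sq_nonneg (u 0 - u 1 - u 2)]
  have h02 : 0 < u 0 * u 2 := by nlinarith [sq_nonneg (u 1 - u 0 - u 2)]
  fin_cases i <;> fin_cases j <;>
    simp only [Fin.zero_eta, Fin.mk_one, Fin.reduceFinMk, Fin.isValue] at hi ⊢ <;> nlinarith

lemma const_mem_forwardCone {c : ℝ} (hc : 0 < c) : (fun _ => c) ∈ forwardCone :=
  ⟨by rw [show lorentzForm (fun _ => c) = 3 * c ^ 2 by unfold lorentzForm; ring]; positivity,
    fun _ => hc⟩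

lemma energyCoords_const (c : ℝ) : energyCoords (fun _ => c) = fun _ => 12 * c := by
  ext i
  simp only [energyCoords, Finset.sum_const, Finset.card_univ, Fintype.card_fin, nsmul_eq_mul,
    Nat.cast_ofNat]
  ring

lemma energyCoords_zero (v : Fin 3 → ℝ) : energyCoords v 0 = 14 * v 0 - v 1 - v 2 := by
  simp only [energyCoords, Fin.sum_univ_three]; ring

lemma lorentzForm_energyCoords_mulVec (i : Fin 3) (v : Fin 3 → ℝ) :
    lorentzForm (energyCoords (Emat i *ᵥ v)) = lorentzForm (energyCoords v) / 25 := by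
  fin_cases i <;>
    simp only [lorentzForm, energyCoords, mulVec, dotProduct, Emat, E0, E1, E2, Fin.zero_eta,
      Fin.mk_one, Fin.reduceFinMk, Fin.isValue, cons_val_zero, cons_val_one, cons_val, of_apply,
      cons_val', cons_val_fin_one, Fin.sum_univ_three] <;>
    ring

lemma energyCoords_mulVec_self (i : Fin 3) (v : Fin 3 → ℝ) :
    energyCoords (Emat i *ᵥ v) i = 3 / 5 * energyCoords v i := by
  fin_cases i <;>
    simp only [energyCoords, mulVec, dotProduct, Emat, E0, E1, E2, Fin.zero_eta, Fin.mk_one,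
      Fin.reduceFinMk, Fin.isValue, cons_val_zero, cons_val_one, cons_val, of_apply, cons_val',
      cons_val_fin_one, Fin.sum_univ_three] <;>
    ring

lemma energyCoords_mulVec_mem_forwardCone (i : Fin 3) {v : Fin 3 → ℝ}
    (hv : energyCoords v ∈ forwardCone) : energyCoords (Emat i *ᵥ v) ∈ forwardCone := by
  obtain ⟨hQ, hpos⟩ := hv
  have hQ' : 0 < lorentzForm (energyCoords (Emat i *ᵥ v)) := by
    rw [lorentzForm_energyCoords_mulVec]; positivity
  have hi : 0 < energyCoords (Emat i *ᵥ v) i := by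
    rw [energyCoords_mulVec_self]; exact mul_pos (by norm_num) (hpos i)
  exact ⟨hQ', pos_of_lorentzForm_pos hQ' hi⟩

lemma Eword_cons (i : Fin 3) (w : List (Fin 3)) : Eword (i :: w) = Eword w * Emat i := by
  simp [Eword]

lemma energyCoords_Eword_mulVec_mem_forwardCone (w : List (Fin 3)) {v : Fin 3 → ℝ}
    (hv : energyCoords v ∈ forwardCone) : energyCoords (Eword w *ᵥ v) ∈ forwardCone := by
  induction w generalizing v with
  | nil => simpa [Eword] using hv
  | cons i w ih =>
    rw [Eword_cons, ← mulVec_mulVec]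
    exact ih (energyCoords_mulVec_mem_forwardCone i hv)

/-- For every finite word `w` over `{0,1,2}`, the vector
`(x,y,z)ᵀ = E_w (2,2,2)ᵀ` satisfies `14x - y - z > 0`. -/
theorem stmt_0 (w : List (Fin 3)) :
    14 * (Eword w *ᵥ ![2, 2, 2]) 0 - (Eword w *ᵥ ![2, 2, 2]) 1
      - (Eword w *ᵥ ![2, 2, 2]) 2 > 0 := by
  have htwo : (![2, 2, 2] : Fin 3 → ℝ) = fun _ => 2 := by ext i; fin_cases i <;> rfl
  have hbase : energyCoords ![2, 2, 2] ∈ forwardCone := by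
    rw [htwo, energyCoords_const]; exact const_mem_forwardCone (by norm_num)
  rw [gt_iff_lt, ← energyCoords_zero]
  exact (energyCoords_Eword_mulVec_mem_forwardCone w hbase).2 0
end

section
/- (a) For every v = (v_0, v_1, v_2)^T in R^3 and every natural number m, (1,1,1) E_0^m v = (-(3/4)v_0 + (9/8)v_1 + (9/8)v_2) (1/15)^m + (1/8)(14 v_0 - v_1 - v_2) (3/5)^m. (b) For every finite word w over {0,1,2}, setting v = E_w (2,2,2)^T, there exist constants 0 < k_1 <= k_2 such that for all m, k_1 (3/5)^m <= (1,1,1) E_0^m v <= k_2 (3/5)^m. -/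
/-!
The row vector `(1,1,1)` is the sum of the left eigenvectors `(-3/4, 9/8, 9/8)` and
`(7/4, -1/8, -1/8)` of `E₀`, with eigenvalues `1/15` and `3/5`; this is (a).

For (b), pass to the coordinates `eᵢ = 15 vᵢ - (v₀ + v₁ + v₂)`. There `E₀` acts by
`(a, b, c) ↦ (3a/5, (2a + 2b - c)/15, (2a + 2c - b)/15)`, and `E₁`, `E₂` act in the same way up
to a permutation of the coordinates. This map multiplies the Heron form
`2(ab + bc + ca) - a² - b² - c²` by `1/25`, so the cone where `a, b, c` and the Heron form are
positive is invariant; it contains the excesses of `(2,2,2)`. On this cone both the coefficient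
`e₀/8` of `(3/5)^m` and the total mass `v₀ + v₁ + v₂ = (e₀ + e₁ + e₂)/12` are positive, and
`(1,1,1) E₀^m v / (3/5)^m` lies between these two numbers.
-/

open Matrix BigOperators

lemma dotProduct_pow_mulVec_of_vecMul_eq_smul {n R : Type*} [Fintype n] [DecidableEq n]
    [CommRing R] {A : Matrix n n R} {ℓ : n → R} {c : R} (h : ℓ ᵥ* A = c • ℓ)
    (v : n → R) (m : ℕ) : ℓ ⬝ᵥ (A ^ m *ᵥ v) = c ^ m * (ℓ ⬝ᵥ v) := by
  have hpow : ℓ ᵥ* A ^ m = c ^ m • ℓ := by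
    induction m with
    | zero => simp
    | succ m ih => rw [pow_succ, ← vecMul_vecMul, ih, smul_vecMul, h, smul_smul, pow_succ]
  rw [dotProduct_mulVec, hpow, smul_dotProduct, smul_eq_mul]

lemma exists_bounds_mul_pow_add_mul_pow {r s A B : ℝ} (hr : 0 ≤ r) (hrs : r < s)
    (hB : 0 < B) (hAB : 0 < A + B) :
    ∃ k₁ k₂ : ℝ, 0 < k₁ ∧ k₁ ≤ k₂ ∧
      ∀ m : ℕ, k₁ * s ^ m ≤ A * r ^ m + B * s ^ m ∧
        A * r ^ m + B * s ^ m ≤ k₂ * s ^ m := by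
  have hs : 0 < s := hr.trans_lt hrs
  refine ⟨min B (A + B), max B (A + B), lt_min hB hAB, min_le_max, fun m => ?_⟩
  set t := (r / s) ^ m with ht
  have ht₀ : 0 ≤ t := by positivity
  have ht₁ : t ≤ 1 := pow_le_one₀ (by positivity) ((div_le_one hs).2 hrs.le)
  have hrm : r ^ m = t * s ^ m := by rw [ht, div_pow, div_mul_cancel₀ _ (pow_ne_zero _ hs.ne')]
  rw [hrm, show A * (t * s ^ m) + B * s ^ m = (B + A * t) * s ^ m by ring]
  have hcombo : B + A * t = (1 - t) * B + t * (A + B) := by ring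
  constructor <;> gcongr <;> rw [hcombo]
  · nlinarith [min_le_left B (A + B), min_le_right B (A + B)]
  · nlinarith [le_max_left B (A + B), le_max_right B (A + B)]

/-- Sixteen times the squared area of a triangle with side lengths `√a`, `√b`, `√c`. -/
def heronForm (a b c : ℝ) : ℝ := 2 * (a * b + b * c + c * a) - a ^ 2 - b ^ 2 - c ^ 2

lemma heronForm_comm_left (a b c : ℝ) : heronForm b a c = heronForm a b c := by
  unfold heronForm; ring

lemma heronForm_comm_right (a b c : ℝ) : heronForm a c b = heronForm a b c := by
  unfold heronForm; ring

lemma two_mul_add_two_mul_sub_pos_of_heronForm_pos {a b c : ℝ} (hc : 0 < c)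
    (h : 0 < heronForm a b c) : 0 < 2 * a + 2 * b - c := by
  have hform : heronForm a b c = c * (2 * a + 2 * b - c) - (a - b) ^ 2 := by
    unfold heronForm; ring
  rw [hform] at h
  exact pos_of_mul_pos_right (by nlinarith [sq_nonneg (a - b)]) hc.le

def HeronCone (a b c : ℝ) : Prop := 0 < a ∧ 0 < b ∧ 0 < c ∧ 0 < heronForm a b c

namespace HeronCone

variable {a b c : ℝ}

lemma swap_left (h : HeronCone a b c) : HeronCone b a c := by
  obtain ⟨ha, hb, hc, hQ⟩ := h
  exact ⟨hb, ha, hc, heronForm_comm_left a b c ▸ hQ⟩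

lemma swap_right (h : HeronCone a b c) : HeronCone a c b := by
  obtain ⟨ha, hb, hc, hQ⟩ := h
  exact ⟨ha, hc, hb, heronForm_comm_right a b c ▸ hQ⟩

lemma step (h : HeronCone a b c) :
    HeronCone (3 / 5 * a) ((2 * a + 2 * b - c) / 15) ((2 * a + 2 * c - b) / 15) := by
  obtain ⟨ha, hb, hc, hQ⟩ := h
  have hQ' : 0 < heronForm a c b := heronForm_comm_right a b c ▸ hQ
  have hscale : heronForm (3 / 5 * a) ((2 * a + 2 * b - c) / 15) ((2 * a + 2 * c - b) / 15)
      = heronForm a b c / 25 := by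
    unfold heronForm; ring
  refine ⟨by positivity, ?_, ?_, by rw [hscale]; positivity⟩
  · exact div_pos (two_mul_add_two_mul_sub_pos_of_heronForm_pos hc hQ) (by norm_num)
  · exact div_pos (two_mul_add_two_mul_sub_pos_of_heronForm_pos hb hQ') (by norm_num)

end HeronCone

def excess (v : Fin 3 → ℝ) (i : Fin 3) : ℝ := 15 * v i - (v 0 + v 1 + v 2)

lemma excess_E0_mulVec (v : Fin 3 → ℝ) :
    excess (E0 *ᵥ v) = ![3 / 5 * excess v 0, (2 * excess v 0 + 2 * excess v 1 - excess v 2) / 15,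
      (2 * excess v 0 + 2 * excess v 2 - excess v 1) / 15] := by
  ext i; fin_cases i <;> simp [excess, E0, mulVec, dotProduct, Fin.sum_univ_three] <;> ring

lemma excess_E1_mulVec (v : Fin 3 → ℝ) :
    excess (E1 *ᵥ v) = ![(2 * excess v 1 + 2 * excess v 0 - excess v 2) / 15, 3 / 5 * excess v 1,
      (2 * excess v 1 + 2 * excess v 2 - excess v 0) / 15] := by
  ext i; fin_cases i <;> simp [excess, E1, mulVec, dotProduct, Fin.sum_univ_three] <;> ring

lemma excess_E2_mulVec (v : Fin 3 → ℝ) :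
    excess (E2 *ᵥ v) = ![(2 * excess v 2 + 2 * excess v 0 - excess v 1) / 15,
      (2 * excess v 2 + 2 * excess v 1 - excess v 0) / 15, 3 / 5 * excess v 2] := by
  ext i; fin_cases i <;> simp [excess, E2, mulVec, dotProduct, Fin.sum_univ_three] <;> ring

def Admissible (v : Fin 3 → ℝ) : Prop := HeronCone (excess v 0) (excess v 1) (excess v 2)

lemma Admissible.Emat_mulVec {v : Fin 3 → ℝ} (hv : Admissible v) (i : Fin 3) :
    Admissible (Emat i *ᵥ v) := by
  fin_cases i
  · show Admissible (E0 *ᵥ v)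
    simpa [Admissible, excess_E0_mulVec] using hv.step
  · show Admissible (E1 *ᵥ v)
    simpa [Admissible, excess_E1_mulVec] using hv.swap_left.step.swap_left
  · show Admissible (E2 *ᵥ v)
    simpa [Admissible, excess_E2_mulVec] using hv.swap_right.swap_left.step.swap_left.swap_right

lemma Admissible.Eword_mulVec {v : Fin 3 → ℝ} (hv : Admissible v) (w : List (Fin 3)) :
    Admissible (Eword w *ᵥ v) := by
  induction w generalizing v with
  | nil => simpa [Eword] using hv
  | cons i w ih =>
    have hcons : Eword (i :: w) = Eword w * Emat i := by simp [Eword]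
    rw [hcons, ← mulVec_mulVec]
    exact ih (hv.Emat_mulVec i)

lemma admissible_two_two_two : Admissible ![2, 2, 2] := by
  norm_num [Admissible, HeronCone, excess, heronForm, Matrix.cons_val_two]

lemma one_dotProduct_E0_pow_mulVec (v : Fin 3 → ℝ) (m : ℕ) :
    (![1, 1, 1] : Fin 3 → ℝ) ⬝ᵥ ((E0 ^ m) *ᵥ v) =
      (-(3 / 4) * v 0 + (9 / 8) * v 1 + (9 / 8) * v 2) * (1 / 15 : ℝ) ^ m
        + (1 / 8) * (14 * v 0 - v 1 - v 2) * (3 / 5 : ℝ) ^ m := by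
  have hfast : (![-3 / 4, 9 / 8, 9 / 8] : Fin 3 → ℝ) ᵥ* E0 =
      (1 / 15 : ℝ) • ![-3 / 4, 9 / 8, 9 / 8] := by
    ext i; fin_cases i <;> norm_num [E0, vecMul, dotProduct, Fin.sum_univ_succ]
  have hslow : (![7 / 4, -1 / 8, -1 / 8] : Fin 3 → ℝ) ᵥ* E0 =
      (3 / 5 : ℝ) • ![7 / 4, -1 / 8, -1 / 8] := by
    ext i; fin_cases i <;> norm_num [E0, vecMul, dotProduct, Fin.sum_univ_succ]
  have hsplit : (![1, 1, 1] : Fin 3 → ℝ) =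
      ![-3 / 4, 9 / 8, 9 / 8] + ![7 / 4, -1 / 8, -1 / 8] := by
    ext i; fin_cases i <;> norm_num
  rw [hsplit, add_dotProduct, dotProduct_pow_mulVec_of_vecMul_eq_smul hfast,
    dotProduct_pow_mulVec_of_vecMul_eq_smul hslow]
  simp only [dotProduct, Fin.sum_univ_three, Matrix.cons_val_zero, Matrix.cons_val_one,
    Matrix.cons_val_two, Matrix.head_cons, Matrix.tail_cons]
  ring

/-- (a) For every `v ∈ ℝ³` and natural `m`,
`(1,1,1) E₀^m v = (-(3/4)v₀ + (9/8)v₁ + (9/8)v₂) (1/15)^m + (1/8)(14v₀ - v₁ - v₂)(3/5)^m`.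
(b) For every finite word `w`, setting `v = E_w (2,2,2)ᵀ`, there are constants
`0 < k₁ ≤ k₂` with `k₁ (3/5)^m ≤ (1,1,1) E₀^m v ≤ k₂ (3/5)^m` for all `m`. -/
theorem stmt_1 :
    (∀ (v : Fin 3 → ℝ) (m : ℕ),
      (![1, 1, 1] : Fin 3 → ℝ) ⬝ᵥ ((E0 ^ m) *ᵥ v) =
        (-(3 / 4) * v 0 + (9 / 8) * v 1 + (9 / 8) * v 2) * (1 / 15 : ℝ) ^ m
          + (1 / 8) * (14 * v 0 - v 1 - v 2) * (3 / 5 : ℝ) ^ m) ∧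
    (∀ w : List (Fin 3), ∃ k₁ k₂ : ℝ, 0 < k₁ ∧ k₁ ≤ k₂ ∧
      ∀ m : ℕ,
        k₁ * (3 / 5 : ℝ) ^ m ≤
            (![1, 1, 1] : Fin 3 → ℝ) ⬝ᵥ ((E0 ^ m) *ᵥ (Eword w *ᵥ ![2, 2, 2])) ∧
        (![1, 1, 1] : Fin 3 → ℝ) ⬝ᵥ ((E0 ^ m) *ᵥ (Eword w *ᵥ ![2, 2, 2])) ≤
            k₂ * (3 / 5 : ℝ) ^ m) := by
  refine ⟨one_dotProduct_E0_pow_mulVec, fun w => ?_⟩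
  obtain ⟨he₀, he₁, he₂, -⟩ := admissible_two_two_two.Eword_mulVec w
  simp only [one_dotProduct_E0_pow_mulVec]
  simp only [excess] at he₀ he₁ he₂
  exact exists_bounds_mul_pow_add_mul_pow (by norm_num) (by norm_num) (by linarith) (by linarith)
end

section
/- The following limits of matrix powers hold (entrywise, equivalently in any matrix norm): lim_{m -> infinity} (5/3)^m E_0^m = (1/40)[[42,-3,-3],[14,-1,-1],[14,-1,-1]]; lim_{m -> infinity} (5/3)^m E_1^m = (1/40)[[-1,14,-1],[-3,42,-3],[-1,14,-1]]; lim_{m -> infinity} (5/3)^m E_2^m = (1/40)[[-1,-1,14],[-1,-1,14],[-3,-3,42]]. In particular each limit matrix has rank one. -/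
open Matrix BigOperators

/-- Key decomposition lemma: if `E = (3/5)L + (1/5)P + (1/15)Q` spectrally, then
`E^m = (3/5)^m L + (1/5)^m P + (1/15)^m Q`. -/
lemma pow_formula (E L P Q : Matrix (Fin 3) (Fin 3) ℝ)
    (h0 : L + P + Q = 1)
    (hL : L * E = (3/5 : ℝ) • L) (hP : P * E = (1/5 : ℝ) • P)
    (hQ : Q * E = (1/15 : ℝ) • Q) :
    ∀ m : ℕ, E ^ m = ((3/5 : ℝ) ^ m) • L + ((1/5 : ℝ) ^ m) • P + ((1/15 : ℝ) ^ m) • Q := by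
  intro m
  induction m with
  | zero => simpa using h0.symm
  | succ n ih =>
      rw [pow_succ, ih]
      simp only [add_mul, smul_mul_assoc, hL, hP, hQ, smul_smul, pow_succ]

lemma tendsto_formula (E L P Q : Matrix (Fin 3) (Fin 3) ℝ)
    (h0 : L + P + Q = 1)
    (hL : L * E = (3/5 : ℝ) • L) (hP : P * E = (1/5 : ℝ) • P)
    (hQ : Q * E = (1/15 : ℝ) • Q) :
    Filter.Tendsto (fun m : ℕ => ((5 / 3 : ℝ) ^ m) • E ^ m) Filter.atTop (nhds L) := by
  have key : ∀ m : ℕ, ((5 / 3 : ℝ) ^ m) • E ^ m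
      = L + ((1/3 : ℝ) ^ m) • P + ((1/9 : ℝ) ^ m) • Q := by
    intro m
    rw [pow_formula E L P Q h0 hL hP hQ m]
    simp only [smul_add, smul_smul, ← mul_pow]
    norm_num
  simp only [key]
  have h1 : Filter.Tendsto (fun m : ℕ => ((1/3 : ℝ) ^ m) • P) Filter.atTop (nhds 0) := by
    have := (tendsto_pow_atTop_nhds_zero_of_lt_one (by norm_num : (0:ℝ) ≤ 1/3)
      (by norm_num : (1/3:ℝ) < 1)).smul_const P
    simpa using this
  have h2 : Filter.Tendsto (fun m : ℕ => ((1/9 : ℝ) ^ m) • Q) Filter.atTop (nhds 0) := by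
    have := (tendsto_pow_atTop_nhds_zero_of_lt_one (by norm_num : (0:ℝ) ≤ 1/9)
      (by norm_num : (1/9:ℝ) < 1)).smul_const Q
    simpa using this
  have h3 : Filter.Tendsto (fun m : ℕ => L + ((1/3 : ℝ) ^ m) • P + ((1/9 : ℝ) ^ m) • Q)
      Filter.atTop (nhds (L + 0 + 0)) := (tendsto_const_nhds.add h1).add h2
  simpa using h3

lemma rank_helper (A : Matrix (Fin 3) (Fin 3) ℝ) (B : Matrix (Fin 3) (Fin 1) ℝ)
    (C : Matrix (Fin 1) (Fin 3) ℝ) (hBC : A = B * C) (x : Fin 3 → ℝ)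
    (hx : A.mulVec x ≠ 0) : A.rank = 1 := by
  have hle : A.rank ≤ 1 := by
    calc A.rank ≤ B.rank := by rw [hBC]; exact Matrix.rank_mul_le_left B C
    _ ≤ Fintype.card (Fin 1) := Matrix.rank_le_card_width B
    _ = 1 := by simp
  have hge : A.rank ≠ 0 := by
    intro h
    rw [Matrix.rank, Submodule.finrank_eq_zero] at h
    have : A.mulVecLin x ∈ LinearMap.range A.mulVecLin := LinearMap.mem_range_self _ x
    rw [h] at this
    simp only [Submodule.mem_bot] at this
    exact hx (by simpa [Matrix.mulVecLin_apply] using this)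
  omega

set_option maxHeartbeats 1600000 in
/-- The limits `lim (5/3)^m E_i^m` exist and equal the indicated rank-one matrices. -/
theorem stmt_2 :
    Filter.Tendsto (fun m : ℕ => ((5 / 3 : ℝ) ^ m) • E0 ^ m) Filter.atTop
      (nhds ((1 / 40 : ℝ) • !![42, -3, -3; 14, -1, -1; 14, -1, -1])) ∧
    Filter.Tendsto (fun m : ℕ => ((5 / 3 : ℝ) ^ m) • E1 ^ m) Filter.atTop
      (nhds ((1 / 40 : ℝ) • !![-1, 14, -1; -3, 42, -3; -1, 14, -1])) ∧
    Filter.Tendsto (fun m : ℕ => ((5 / 3 : ℝ) ^ m) • E2 ^ m) Filter.atTop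
      (nhds ((1 / 40 : ℝ) • !![-1, -1, 14; -1, -1, 14; -3, -3, 42])) ∧
    ((1 / 40 : ℝ) • !![42, -3, -3; 14, -1, -1; 14, -1, -1] :
      Matrix (Fin 3) (Fin 3) ℝ).rank = 1 ∧
    ((1 / 40 : ℝ) • !![-1, 14, -1; -3, 42, -3; -1, 14, -1] :
      Matrix (Fin 3) (Fin 3) ℝ).rank = 1 ∧
    ((1 / 40 : ℝ) • !![-1, -1, 14; -1, -1, 14; -3, -3, 42] :
      Matrix (Fin 3) (Fin 3) ℝ).rank = 1 := by
  refine ⟨?_, ?_, ?_, ?_, ?_, ?_⟩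
  · exact tendsto_formula E0 _
      !![0, 0, 0; 0, 1/2, -1/2; 0, -1/2, 1/2]
      !![-1/20, 3/40, 3/40; -7/20, 21/40, 21/40; -7/20, 21/40, 21/40]
      (by ext i j; fin_cases i <;> fin_cases j <;>
        simp [Matrix.one_apply, Matrix.vecHead, Matrix.vecTail] <;> norm_num)
      (by ext i j; fin_cases i <;> fin_cases j <;>
        simp [E0, Matrix.mul_apply, Fin.sum_univ_three, Matrix.vecHead, Matrix.vecTail] <;> norm_num)
      (by ext i j; fin_cases i <;> fin_cases j <;>
        simp [E0, Matrix.mul_apply, Fin.sum_univ_three, Matrix.vecHead, Matrix.vecTail] <;> norm_num)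
      (by ext i j; fin_cases i <;> fin_cases j <;>
        simp [E0, Matrix.mul_apply, Fin.sum_univ_three, Matrix.vecHead, Matrix.vecTail] <;> norm_num)
  · exact tendsto_formula E1 _
      !![1/2, 0, -1/2; 0, 0, 0; -1/2, 0, 1/2]
      !![21/40, -7/20, 21/40; 3/40, -1/20, 3/40; 21/40, -7/20, 21/40]
      (by ext i j; fin_cases i <;> fin_cases j <;>
        simp [Matrix.one_apply, Matrix.vecHead, Matrix.vecTail] <;> norm_num)
      (by ext i j; fin_cases i <;> fin_cases j <;>
        simp [E1, Matrix.mul_apply, Fin.sum_univ_three, Matrix.vecHead, Matrix.vecTail] <;> norm_num)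
      (by ext i j; fin_cases i <;> fin_cases j <;>
        simp [E1, Matrix.mul_apply, Fin.sum_univ_three, Matrix.vecHead, Matrix.vecTail] <;> norm_num)
      (by ext i j; fin_cases i <;> fin_cases j <;>
        simp [E1, Matrix.mul_apply, Fin.sum_univ_three, Matrix.vecHead, Matrix.vecTail] <;> norm_num)
  · exact tendsto_formula E2 _
      !![1/2, -1/2, 0; -1/2, 1/2, 0; 0, 0, 0]
      !![21/40, 21/40, -7/20; 21/40, 21/40, -7/20; 3/40, 3/40, -1/20]
      (by ext i j; fin_cases i <;> fin_cases j <;>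
        simp [Matrix.one_apply, Matrix.vecHead, Matrix.vecTail] <;> norm_num)
      (by ext i j; fin_cases i <;> fin_cases j <;>
        simp [E2, Matrix.mul_apply, Fin.sum_univ_three, Matrix.vecHead, Matrix.vecTail] <;> norm_num)
      (by ext i j; fin_cases i <;> fin_cases j <;>
        simp [E2, Matrix.mul_apply, Fin.sum_univ_three, Matrix.vecHead, Matrix.vecTail] <;> norm_num)
      (by ext i j; fin_cases i <;> fin_cases j <;>
        simp [E2, Matrix.mul_apply, Fin.sum_univ_three, Matrix.vecHead, Matrix.vecTail] <;> norm_num)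
  · exact rank_helper _ !![3; 1; 1] !![14/40, -1/40, -1/40]
      (by ext i j; fin_cases i <;> fin_cases j <;>
        simp [Matrix.mul_apply, Fin.sum_univ_one, Matrix.vecHead, Matrix.vecTail] <;> norm_num)
      ![1, 0, 0]
      (by
        intro h
        have := congrFun h 0
        simp [Matrix.mulVec, dotProduct, Fin.sum_univ_three, Matrix.vecHead, Matrix.vecTail] at this)
  · exact rank_helper _ !![1; 3; 1] !![-1/40, 14/40, -1/40]
      (by ext i j; fin_cases i <;> fin_cases j <;>
        simp [Matrix.mul_apply, Fin.sum_univ_one, Matrix.vecHead, Matrix.vecTail] <;> norm_num)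
      ![0, 1, 0]
      (by
        intro h
        have := congrFun h 0
        simp [Matrix.mulVec, dotProduct, Fin.sum_univ_three, Matrix.vecHead, Matrix.vecTail] at this)
  · exact rank_helper _ !![1; 1; 3] !![-1/40, -1/40, 14/40]
      (by ext i j; fin_cases i <;> fin_cases j <;>
        simp [Matrix.mul_apply, Fin.sum_univ_one, Matrix.vecHead, Matrix.vecTail] <;> norm_num)
      ![0, 0, 1]
      (by
        intro h
        have := congrFun h 0
        simp [Matrix.mulVec, dotProduct, Fin.sum_univ_three, Matrix.vecHead, Matrix.vecTail] at this)
end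

section
/- For every finite word w over {1,2}, setting v = E_w (1,1,3)^T, one has (-1,-1,14) E_2 v >= (-1,-1,14) E_1 v. -/
open Matrix BigOperators

/-!
The vectors `E_w (1,1,3)ᵀ` with `w ∈ {1,2}*` all lie in the simplicial cone `K` spanned by
`(1,3,1)ᵀ`, `(1,1,3)ᵀ` and `(-1,3,3)ᵀ`, whose facet functionals are `f₁ = (-4,1,1)`,
`f₂ = (3,-2,3)` and `f₃ = (3,3,-2)`. This holds because `E_1` and `E_2` map `K` into itself
(each facet functional of `K`, multiplied by `E_1` or `E_2`, is a nonnegative combination of the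
facet functionals). The functional `(-1,-1,14) (E_2 - E_1) = (3/5) (1,-4,11)` is
`(3/5) (2 f₁ + 3 f₂)`, hence nonnegative on `K`.
-/

theorem Set.MapsTo.mulVec_prod_reverse_map {ι n R : Type*} [Fintype n] [DecidableEq n]
    [CommSemiring R] {M : ι → Matrix n n R} {p : ι → Prop} {S : Set (n → R)}
    (hM : ∀ i, p i → S.MapsTo (M i *ᵥ ·) S) :
    ∀ w : List ι, (∀ i ∈ w, p i) → S.MapsTo (((w.map M).reverse.prod) *ᵥ ·) S
  | [], _ => fun v hv => by simpa using hv
  | a :: t, hw => by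
    have ht := Set.MapsTo.mulVec_prod_reverse_map hM t fun i hi => hw i (List.mem_cons_of_mem a hi)
    simpa [Function.comp_def, mulVec_mulVec] using ht.comp (hM a (hw a List.mem_cons_self))

def energyCone : Set (Fin 3 → ℝ) :=
  {v | 0 ≤ -4 * v 0 + v 1 + v 2 ∧ 0 ≤ 3 * v 0 - 2 * v 1 + 3 * v 2 ∧ 0 ≤ 3 * v 0 + 3 * v 1 - 2 * v 2}

lemma E1_mulVec (v : Fin 3 → ℝ) :
    E1 *ᵥ v = ![3/25 * v 0 + 14/75 * v 1 - 2/25 * v 2,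
      -1/25 * v 0 + 47/75 * v 1 - 1/25 * v 2,
      -2/25 * v 0 + 14/75 * v 1 + 3/25 * v 2] := by
  ext i; fin_cases i <;> simp [E1, mulVec, dotProduct, Fin.sum_univ_three] <;> ring

lemma E2_mulVec (v : Fin 3 → ℝ) :
    E2 *ᵥ v = ![3/25 * v 0 - 2/25 * v 1 + 14/75 * v 2,
      -2/25 * v 0 + 3/25 * v 1 + 14/75 * v 2,
      -1/25 * v 0 - 1/25 * v 1 + 47/75 * v 2] := by
  ext i; fin_cases i <;> simp [E2, mulVec, dotProduct, Fin.sum_univ_three] <;> ring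

lemma mapsTo_E1_energyCone : energyCone.MapsTo (E1 *ᵥ ·) energyCone := by
  rintro v ⟨h₁, h₂, h₃⟩
  simp only [energyCone, Set.mem_ofPred_eq, E1_mulVec, cons_val_zero, cons_val_one, cons_val_two,
    head_cons, tail_cons]
  refine ⟨?_, ?_, ?_⟩ <;> linarith

lemma mapsTo_E2_energyCone : energyCone.MapsTo (E2 *ᵥ ·) energyCone := by
  rintro v ⟨h₁, h₂, h₃⟩
  simp only [energyCone, Set.mem_ofPred_eq, E2_mulVec, cons_val_zero, cons_val_one, cons_val_two,
    head_cons, tail_cons]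
  refine ⟨?_, ?_, ?_⟩ <;> linarith

lemma mapsTo_Eword_energyCone (w : List (Fin 3)) (hw : ∀ i ∈ w, i = 1 ∨ i = 2) :
    energyCone.MapsTo (Eword w *ᵥ ·) energyCone := by
  refine Set.MapsTo.mulVec_prod_reverse_map (fun i hi => ?_) w hw
  rcases hi with rfl | rfl
  exacts [mapsTo_E1_energyCone, mapsTo_E2_energyCone]

lemma dotProduct_E2_mulVec_sub_E1_mulVec (v : Fin 3 → ℝ) :
    (![-1, -1, 14] : Fin 3 → ℝ) ⬝ᵥ (E2 *ᵥ v) - (![-1, -1, 14] : Fin 3 → ℝ) ⬝ᵥ (E1 *ᵥ v) =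
      3/5 * (v 0 - 4 * v 1 + 11 * v 2) := by
  simp only [E1_mulVec, E2_mulVec, dotProduct, Fin.sum_univ_three, cons_val_zero, cons_val_one,
    cons_val_two, head_cons, tail_cons]
  ring

/-- For every finite word `w` over `{1,2}`, setting `v = E_w (1,1,3)ᵀ`,
one has `(-1,-1,14) E₂ v ≥ (-1,-1,14) E₁ v`. -/
theorem stmt_4 (w : List (Fin 3)) (hw : ∀ i ∈ w, i = 1 ∨ i = 2) :
    (![-1, -1, 14] : Fin 3 → ℝ) ⬝ᵥ (E2 *ᵥ (Eword w *ᵥ ![1, 1, 3])) ≥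
      (![-1, -1, 14] : Fin 3 → ℝ) ⬝ᵥ (E1 *ᵥ (Eword w *ᵥ ![1, 1, 3])) := by
  have h113 : (![1, 1, 3] : Fin 3 → ℝ) ∈ energyCone := by
    show (0 : ℝ) ≤ -4 * 1 + 1 + 3 ∧ (0 : ℝ) ≤ 3 * 1 - 2 * 1 + 3 * 3 ∧ (0 : ℝ) ≤ 3 * 1 + 3 * 1 - 2 * 3
    norm_num
  obtain ⟨h₁, h₂, -⟩ := mapsTo_Eword_energyCone w hw h113
  have := dotProduct_E2_mulVec_sub_E1_mulVec (Eword w *ᵥ ![1, 1, 3])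
  linarith
end

section
/- There exists a constant C > 0 such that for every natural number m and every word w over {0,1,2} of length m, the operator norm of E_w (as a linear map on R^3 with the l^1 norm, i.e., the maximum absolute column sum of E_w) is at most C (3/5)^m. -/
open Matrix BigOperators

/-! The vectors `(3,1,1)ᵀ, (1,3,1)ᵀ, (1,1,3)ᵀ` are eigenvectors of `E_0, E_1, E_2` for the
eigenvalue `3/5`. In the basis they form, given by the columns of `P`, every `E_i` has absolute
column sums at most `3/5`, so `‖P⁻¹ E_w P‖ ≤ (3/5)^m` for the column-sum norm, and hence
`‖E_w‖ ≤ ‖P‖ ‖P⁻¹‖ (3/5)^m = 3 (3/5)^m`. Mathlib's matrix operator norm is the row-sum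
(`ℓ^∞`) norm, so the argument is run on transposes. -/

attribute [local instance] Matrix.linftyOpSeminormedAddCommGroup Matrix.linftyOpNormedRing

theorem List.prod_map_conj {M : Type*} [Monoid M] {u v : M} (huv : u * v = 1) (hvu : v * u = 1)
    (l : List M) : (l.map (v * · * u)).prod = v * l.prod * u := by
  induction l with
  | nil => simp [hvu]
  | cons a l ih =>
    rw [List.map_cons, List.prod_cons, ih, List.prod_cons]
    calc v * a * u * (v * l.prod * u) = v * a * (u * v) * l.prod * u := by noncomm_ring
      _ = v * (a * l.prod) * u := by rw [huv]; noncomm_ring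

theorem List.norm_prod_le_pow_length {R : Type*} [SeminormedRing R] [NormOneClass R] {r : ℝ}
    {l : List R} (hl : ∀ a ∈ l, ‖a‖ ≤ r) : ‖l.prod‖ ≤ r ^ l.length := by
  refine (List.norm_prod_le l).trans ?_
  simpa [List.map_const', List.prod_replicate] using
    List.prod_map_le_prod_map₀ norm (fun _ => r) (fun a _ => norm_nonneg a) hl

theorem List.norm_prod_le_of_conj {R : Type*} [SeminormedRing R] [NormOneClass R] {u v : R}
    (huv : u * v = 1) (hvu : v * u = 1) {r : ℝ} {l : List R} (hl : ∀ a ∈ l, ‖v * a * u‖ ≤ r) :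
    ‖l.prod‖ ≤ ‖u‖ * ‖v‖ * r ^ l.length := by
  have hconj : l.prod = u * (l.map (v * · * u)).prod * v := by
    rw [List.prod_map_conj huv hvu]
    calc l.prod = (u * v) * l.prod * (u * v) := by rw [huv, one_mul, mul_one]
      _ = _ := by noncomm_ring
  have hbound : ‖(l.map (v * · * u)).prod‖ ≤ r ^ l.length := by
    simpa using List.norm_prod_le_pow_length (l := l.map (v * · * u)) (by simpa using hl)
  calc ‖l.prod‖ ≤ ‖u‖ * ‖(l.map (v * · * u)).prod‖ * ‖v‖ := by
        rw [hconj]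
        exact (norm_mul_le _ _).trans
          (mul_le_mul_of_nonneg_right (norm_mul_le _ _) (norm_nonneg _))
    _ ≤ ‖u‖ * r ^ l.length * ‖v‖ := by gcongr
    _ = ‖u‖ * ‖v‖ * r ^ l.length := by ring

namespace Matrix

theorem sum_norm_le_linfty_opNorm {m n α : Type*} [Fintype m] [Fintype n]
    [SeminormedAddCommGroup α] (A : Matrix m n α) (i : m) : ∑ j, ‖A i j‖ ≤ ‖A‖ := by
  rw [linfty_opNorm_def]
  simpa using NNReal.coe_le_coe.mpr
    (Finset.le_sup (f := fun i => ∑ j, ‖A i j‖₊) (Finset.mem_univ i))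

theorem linfty_opNorm_fin_three_le {a b c d e f g h i r : ℝ} (h₀ : |a| + |b| + |c| ≤ r)
    (h₁ : |d| + |e| + |f| ≤ r) (h₂ : |g| + |h| + |i| ≤ r) :
    ‖!![a, b, c; d, e, f; g, h, i]‖ ≤ r := by
  lift r to NNReal using (by positivity : (0 : ℝ) ≤ |a| + |b| + |c|).trans h₀
  rw [linfty_opNorm_def, NNReal.coe_le_coe]
  refine Finset.sup_le fun k _ => ?_
  rw [← NNReal.coe_le_coe]
  fin_cases k <;> simpa [Fin.sum_univ_three] using ‹_›

end Matrix

namespace EnergyMatrix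

noncomputable def P : Matrix (Fin 3) (Fin 3) ℝ := !![3, 1, 1; 1, 3, 1; 1, 1, 3]

noncomputable def PInv : Matrix (Fin 3) (Fin 3) ℝ :=
  !![2/5, -1/10, -1/10; -1/10, 2/5, -1/10; -1/10, -1/10, 2/5]

theorem P_mul_PInv : P * PInv = 1 := by
  rw [P, PInv, Matrix.one_fin_three]; norm_num [Matrix.mul_fin_three]

theorem PInv_mul_P : PInv * P = 1 := by
  rw [P, PInv, Matrix.one_fin_three]; norm_num [Matrix.mul_fin_three]

theorem norm_P_le : ‖P‖ ≤ 5 := by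
  apply Matrix.linfty_opNorm_fin_three_le <;> norm_num

theorem norm_PInv_le : ‖PInv‖ ≤ 3 / 5 := by
  apply Matrix.linfty_opNorm_fin_three_le <;> norm_num [abs_of_nonneg, abs_of_nonpos]

theorem P_mul_transpose_E0_mul_PInv :
    P * E0ᵀ * PInv = !![3/5, 0, 0; 2/15, 2/15, -1/15; 2/15, -1/15, 2/15] := by
  rw [P, E0, PInv]
  ext i j
  fin_cases i <;> fin_cases j <;>
    simp [Matrix.mul_apply, Matrix.vecMul, dotProduct, Fin.sum_univ_three] <;> norm_num

theorem P_mul_transpose_E1_mul_PInv :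
    P * E1ᵀ * PInv = !![2/15, 2/15, -1/15; 0, 3/5, 0; -1/15, 2/15, 2/15] := by
  rw [P, E1, PInv]
  ext i j
  fin_cases i <;> fin_cases j <;>
    simp [Matrix.mul_apply, Matrix.vecMul, dotProduct, Fin.sum_univ_three] <;> norm_num

theorem P_mul_transpose_E2_mul_PInv :
    P * E2ᵀ * PInv = !![2/15, -1/15, 2/15; -1/15, 2/15, 2/15; 0, 0, 3/5] := by
  rw [P, E2, PInv]
  ext i j
  fin_cases i <;> fin_cases j <;>
    simp [Matrix.mul_apply, Matrix.vecMul, dotProduct, Fin.sum_univ_three] <;> norm_num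

theorem norm_P_mul_transpose_Emat_mul_PInv_le (i : Fin 3) :
    ‖P * (Emat i)ᵀ * PInv‖ ≤ 3 / 5 := by
  fin_cases i
  · show ‖P * E0ᵀ * PInv‖ ≤ 3 / 5
    rw [P_mul_transpose_E0_mul_PInv]
    apply Matrix.linfty_opNorm_fin_three_le <;> norm_num [abs_of_nonneg, abs_of_nonpos]
  · show ‖P * E1ᵀ * PInv‖ ≤ 3 / 5
    rw [P_mul_transpose_E1_mul_PInv]
    apply Matrix.linfty_opNorm_fin_three_le <;> norm_num [abs_of_nonneg, abs_of_nonpos]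
  · show ‖P * E2ᵀ * PInv‖ ≤ 3 / 5
    rw [P_mul_transpose_E2_mul_PInv]
    apply Matrix.linfty_opNorm_fin_three_le <;> norm_num [abs_of_nonneg, abs_of_nonpos]

theorem transpose_Eword (w : List (Fin 3)) :
    (Eword w)ᵀ = (w.map fun i => (Emat i)ᵀ).prod := by
  rw [Eword, Matrix.transpose_list_prod, List.map_reverse, List.reverse_reverse, List.map_map]
  rfl

theorem norm_transpose_Eword_le (w : List (Fin 3)) :
    ‖(Eword w)ᵀ‖ ≤ 3 * (3 / 5) ^ w.length := by
  rw [transpose_Eword]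
  calc _ ≤ ‖PInv‖ * ‖P‖ * (3 / 5) ^ (w.map fun i => (Emat i)ᵀ).length :=
        List.norm_prod_le_of_conj PInv_mul_P P_mul_PInv
          (by simpa using fun i _ => norm_P_mul_transpose_Emat_mul_PInv_le i)
    _ ≤ 3 / 5 * 5 * (3 / 5) ^ w.length := by
        rw [List.length_map]
        gcongr
        exacts [norm_PInv_le, norm_P_le]
    _ = 3 * (3 / 5) ^ w.length := by norm_num

end EnergyMatrix

/-- There is a constant `C > 0` such that for every word `w` over `{0,1,2}` of length `m`,
the operator norm of `E_w` on `ℝ³` with the `ℓ¹` norm — i.e. the maximum absolute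
column sum of `E_w` — is at most `C (3/5)^m`. -/
theorem stmt_9 : ∃ C : ℝ, 0 < C ∧ ∀ w : List (Fin 3),
    (Finset.univ.sup' Finset.univ_nonempty fun j : Fin 3 => ∑ i : Fin 3, |Eword w i j|)
      ≤ C * (3 / 5 : ℝ) ^ w.length := by
  refine ⟨3, by norm_num, fun w => Finset.sup'_le _ _ fun j _ => ?_⟩
  calc ∑ i, |Eword w i j| = ∑ i, ‖(Eword w)ᵀ j i‖ := rfl
    _ ≤ ‖(Eword w)ᵀ‖ := Matrix.sum_norm_le_linfty_opNorm _ j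
    _ ≤ 3 * (3 / 5) ^ w.length := EnergyMatrix.norm_transpose_Eword_le w
end
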